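/- Let H be a finite simple graph with n vertices and let Z = {u_1,…,u_k} be a zero forcing set of H with an associated forcing order u_{k+1},…,u_n. Then the vertex set of H can be partitioned into k paths P_1,…,P_k (the forcing chains), where for each i in [k] the path P_i starts at u_i and each vertex of P_i forces the next vertex of P_i, and moreover each forcing chain P_i is an induced path in H. -/

import Mathlib

open SimpleGraph

/-- `σ` is an ordering of the vertices of `H` witnessing that its first `k` vertices form a
zero forcing set: every vertex at position `j ≥ k` is forced by some earlier vertex `σ i`,
i.e. `σ j` is the unique neighbor of `σ i` among `{σ j, σ (j+1), …}`. -/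
def IsZeroForcingOrder {V : Type*} [Fintype V] (H : SimpleGraph V) (k : ℕ)
    (σ : Fin (Fintype.card V) ≃ V) : Prop :=
  ∀ j : Fin (Fintype.card V), k ≤ (j : ℕ) →
    ∃ i : Fin (Fintype.card V), (i : ℕ) < (j : ℕ) ∧
      ∀ l : Fin (Fintype.card V), (j : ℕ) ≤ (l : ℕ) → (H.Adj (σ i) (σ l) ↔ l = j)

/-- With respect to the forcing order `σ` (whose first `k` vertices form the zero forcing set),
the vertex `a` forces the vertex `b`: `a = σ i`, `b = σ j` with `i < j`, `k ≤ j`, and `σ j` is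
the unique neighbor of `σ i` contained in `{σ j, σ (j+1), …}`. -/
def Forces {V : Type*} [Fintype V] (H : SimpleGraph V) (k : ℕ)
    (σ : Fin (Fintype.card V) ≃ V) (a b : V) : Prop :=
  ∃ i j : Fin (Fintype.card V), σ i = a ∧ σ j = b ∧ (i : ℕ) < (j : ℕ) ∧ k ≤ (j : ℕ) ∧
    ∀ l : Fin (Fintype.card V), (j : ℕ) ≤ (l : ℕ) → (H.Adj a (σ l) ↔ l = j)

/-!
Choose for every position `j ≥ k` of the forcing order a forcer `F j < j`. A vertex forces at
most one vertex (its forced vertex is its only neighbour among the later ones), so `F` is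
injective and the positions form a forest of paths hanging from the roots `0, …, k - 1`. The
chain of a root is the sorted list of the positions descending from it; injectivity of `F`
shows that `q` directly follows `p` in a chain exactly when `F q = p`. Inducedness comes from
the same fact: if `σ p ∼ σ q` with `p < q` in one chain, the vertex `c` forced by `σ p`
satisfies `c ≤ q`, and `σ c` is the only neighbour of `σ p` from position `c` on, so `q = c`.
-/

namespace List

variable {α : Type*} [LinearOrder α] {l : List α} {a b : α}

theorem Pairwise.pair_infix_iff (hl : l.Pairwise (· < ·)) :
    [a, b] <:+: l ↔ a ∈ l ∧ b ∈ l ∧ a < b ∧ ∀ c ∈ l, a < c → b ≤ c := by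
  constructor
  · rintro ⟨s, u, rfl⟩
    simp only [append_assoc, cons_append, nil_append, pairwise_append, pairwise_cons,
      mem_cons, forall_eq_or_imp] at hl
    obtain ⟨-, ⟨⟨hab, -⟩, hbu, -⟩, hs⟩ := hl
    refine ⟨by simp, by simp, hab, ?_⟩
    simp only [append_assoc, cons_append, nil_append, mem_append, mem_cons]
    rintro c (hc | rfl | rfl | hc) hac
    · exact absurd hac (hs c hc).1.not_gt
    · exact absurd hac (lt_irrefl c)
    · exact le_rfl
    · exact (hbu c hc).le
  · rintro ⟨ha, hb, hab, hgap⟩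
    induction l with
    | nil => simp at ha
    | cons x t ih =>
      rw [pairwise_cons] at hl
      rcases mem_cons.1 ha with rfl | ha
      · obtain _ | ⟨y, t⟩ := t
        · simp_all
        have hy : y = b := by
          rw [pairwise_cons] at hl
          rcases mem_cons.1 hb with rfl | hb
          · exact (hab.ne rfl).elim
          rcases mem_cons.1 hb with rfl | hb
          · rfl
          exact absurd (hgap y (by simp) (hl.1 y (by simp))) (hl.2.1 b hb).not_ge
        subst hy
        exact (prefix_append [a, y] t).isInfix
      · have hb : b ∈ t := (mem_cons.1 hb).resolve_left ((hl.1 a ha).trans hab).ne'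
        exact (ih hl.2 ha hb fun c hc => hgap c (mem_cons_of_mem x hc)).trans
          (suffix_cons x t).isInfix

theorem Pairwise.head?_eq_of_forall_le (hl : l.Pairwise (· < ·)) (ha : a ∈ l)
    (hmin : ∀ c ∈ l, a ≤ c) : l.head? = some a := by
  obtain _ | ⟨x, t⟩ := l
  · simp at ha
  rw [pairwise_cons] at hl
  rcases mem_cons.1 ha with rfl | ha
  · rfl
  · exact absurd (hmin x mem_cons_self) (hl.1 a ha).not_ge

end List

section ForcingForest

variable {n k : ℕ} {F : Fin n → Fin n}

-- The guard `F j < j` only makes the recursion terminate; it holds for forcer maps.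
def forcingRoot (F : Fin n → Fin n) (k : ℕ) (j : Fin n) : Fin n :=
  if _ : k ≤ (j : ℕ) ∧ F j < j then forcingRoot F k (F j) else j
termination_by j

theorem forcingRoot_of_lt {j : Fin n} (hj : (j : ℕ) < k) : forcingRoot F k j = j := by
  rw [forcingRoot, dif_neg (by omega)]

theorem forcingRoot_of_le (hF : ∀ j : Fin n, k ≤ (j : ℕ) → F j < j) {j : Fin n}
    (hj : k ≤ (j : ℕ)) : forcingRoot F k j = forcingRoot F k (F j) := by
  rw [forcingRoot, dif_pos ⟨hj, hF j hj⟩]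

theorem forcingRoot_le (j : Fin n) : forcingRoot F k j ≤ j := by
  induction j using WellFoundedLT.induction with
  | _ j ih =>
    rw [forcingRoot]
    split_ifs with h
    · exact (ih _ h.2).trans h.2.le
    · exact le_rfl

theorem forcingRoot_lt (hF : ∀ j : Fin n, k ≤ (j : ℕ) → F j < j) (j : Fin n) :
    (forcingRoot F k j : ℕ) < k := by
  induction j using WellFoundedLT.induction with
  | _ j ih =>
    by_cases hj : k ≤ (j : ℕ)
    · rw [forcingRoot_of_le hF hj]
      exact ih _ (hF j hj)
    · rw [forcingRoot_of_lt (not_le.1 hj)]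
      exact not_le.1 hj

theorem exists_forced_le_of_forcingRoot_eq (hF : ∀ j : Fin n, k ≤ (j : ℕ) → F j < j)
    (hinj : Set.InjOn F {j | k ≤ (j : ℕ)}) {p q : Fin n} (hpq : p < q)
    (hroot : forcingRoot F k p = forcingRoot F k q) :
    ∃ c : Fin n, k ≤ (c : ℕ) ∧ F c = p ∧ c ≤ q := by
  induction q using WellFoundedLT.induction generalizing p with
  | _ q ih =>
    have hq : k ≤ (q : ℕ) := by
      by_contra! hq
      rw [forcingRoot_of_lt hq] at hroot
      exact (hroot ▸ forcingRoot_le p).not_gt hpq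
    rw [forcingRoot_of_le hF hq] at hroot
    rcases lt_trichotomy p (F q) with hp | rfl | hp
    · obtain ⟨c, hc, hcp, hcq⟩ := ih _ (hF q hq) hp hroot
      exact ⟨c, hc, hcp, hcq.trans (hF q hq).le⟩
    · exact ⟨q, hq, rfl, le_rfl⟩
    · obtain ⟨c, hc, hcq, hcp⟩ := ih p hpq hp hroot.symm
      obtain rfl : c = q := hinj hc hq hcq
      exact (hpq.not_ge hcp).elim

def forcingChain (F : Fin n → Fin n) (k : ℕ) (r : Fin n) : List (Fin n) :=
  (List.finRange n).filter (forcingRoot F k · = r)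

theorem mem_forcingChain {r p : Fin n} : p ∈ forcingChain F k r ↔ forcingRoot F k p = r := by
  simp [forcingChain]

theorem pairwise_forcingChain (r : Fin n) : (forcingChain F k r).Pairwise (· < ·) :=
  (List.pairwise_lt_finRange n).filter _

theorem head?_forcingChain {r : Fin n} (hr : (r : ℕ) < k) :
    (forcingChain F k r).head? = some r :=
  (pairwise_forcingChain r).head?_eq_of_forall_le (mem_forcingChain.2 (forcingRoot_of_lt hr))
    fun c hc => mem_forcingChain.1 hc ▸ forcingRoot_le c

theorem pair_infix_forcingChain_iff (hF : ∀ j : Fin n, k ≤ (j : ℕ) → F j < j)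
    (hinj : Set.InjOn F {j | k ≤ (j : ℕ)}) {r p q : Fin n} :
    [p, q] <:+: forcingChain F k r ↔ forcingRoot F k p = r ∧ k ≤ (q : ℕ) ∧ F q = p := by
  rw [(pairwise_forcingChain r).pair_infix_iff]
  simp only [mem_forcingChain]
  constructor
  · rintro ⟨hp, hq, hpq, hgap⟩
    obtain ⟨c, hc, hcp, hcq⟩ := exists_forced_le_of_forcingRoot_eq hF hinj hpq (hp.trans hq.symm)
    have hcr : forcingRoot F k c = r := by rw [forcingRoot_of_le hF hc, hcp, hp]
    obtain rfl : c = q := hcq.antisymm (hgap c hcr (hcp ▸ hF c hc))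
    exact ⟨hp, hc, hcp⟩
  · rintro ⟨hp, hq, rfl⟩
    refine ⟨hp, by rw [forcingRoot_of_le hF hq, hp], hF q hq, fun c hc hpc => ?_⟩
    by_contra! hcq
    obtain ⟨c', hc', hc'p, hc'c⟩ :=
      exists_forced_le_of_forcingRoot_eq hF hinj hpc (hp.trans hc.symm)
    obtain rfl : c' = q := hinj hc' hq hc'p
    exact hc'c.not_gt hcq

end ForcingForest

section ForcerMap

variable {V : Type*} {n : ℕ} {H : SimpleGraph V} {k : ℕ} {σ : Fin n → V} {F : Fin n → Fin n}

def IsForcerMap (H : SimpleGraph V) (k : ℕ) (σ : Fin n → V) (F : Fin n → Fin n) : Prop :=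
  ∀ j : Fin n, k ≤ (j : ℕ) → F j < j ∧ ∀ l : Fin n, j ≤ l → (H.Adj (σ (F j)) (σ l) ↔ l = j)

theorem eq_of_forall_adj_iff {i j j' : Fin n}
    (h : ∀ l : Fin n, j ≤ l → (H.Adj (σ i) (σ l) ↔ l = j))
    (h' : ∀ l : Fin n, j' ≤ l → (H.Adj (σ i) (σ l) ↔ l = j')) : j = j' := by
  rcases le_total j j' with hle | hle
  · exact ((h j' hle).1 ((h' j' le_rfl).2 rfl)).symm
  · exact (h' j hle).1 ((h j le_rfl).2 rfl)

theorem IsForcerMap.lt (hF : IsForcerMap H k σ F) : ∀ j : Fin n, k ≤ (j : ℕ) → F j < j :=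
  fun j hj => (hF j hj).1

theorem IsForcerMap.injOn (hF : IsForcerMap H k σ F) : Set.InjOn F {j | k ≤ (j : ℕ)} :=
  fun j hj j' hj' he => eq_of_forall_adj_iff (hF j hj).2 (he ▸ (hF j' hj').2)

theorem IsForcerMap.pair_infix_of_adj (hF : IsForcerMap H k σ F) {r p q : Fin n}
    (hp : p ∈ forcingChain F k r) (hq : q ∈ forcingChain F k r) (hpq : p < q)
    (hadj : H.Adj (σ p) (σ q)) : [p, q] <:+: forcingChain F k r := by
  rw [mem_forcingChain] at hp hq
  obtain ⟨c, hc, rfl, hcq⟩ :=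
    exists_forced_le_of_forcingRoot_eq hF.lt hF.injOn hpq (hp.trans hq.symm)
  obtain rfl : q = c := ((hF c hc).2 q hcq).1 hadj
  exact (pair_infix_forcingChain_iff hF.lt hF.injOn).2 ⟨hp, hc, rfl⟩

end ForcerMap

section ZeroForcing

variable {V : Type*} [Fintype V] {H : SimpleGraph V} {k : ℕ} {σ : Fin (Fintype.card V) ≃ V}

theorem IsZeroForcingOrder.exists_isForcerMap (hσ : IsZeroForcingOrder H k σ) :
    ∃ F, IsForcerMap H k σ F := by
  classical
  refine ⟨fun j => if hj : k ≤ (j : ℕ) then (hσ j hj).choose else j, fun j hj => ?_⟩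
  simp only [dif_pos hj]
  exact (hσ j hj).choose_spec

theorem Forces.adj {a b : V} (h : Forces H k σ a b) : H.Adj a b := by
  obtain ⟨-, j, -, rfl, -, -, hj⟩ := h
  exact (hj j le_rfl).2 rfl

theorem IsForcerMap.forces {F : Fin (Fintype.card V) → Fin (Fintype.card V)}
    (hF : IsForcerMap H k σ F) {r p q : Fin (Fintype.card V)}
    (h : [p, q] <:+: forcingChain F k r) : Forces H k σ (σ p) (σ q) := by
  obtain ⟨-, hq, rfl⟩ := (pair_infix_forcingChain_iff hF.lt hF.injOn).1 h
  exact ⟨F q, q, rfl, rfl, hF.lt q hq, hq, (hF q hq).2⟩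

end ZeroForcing

/-- The vertex set of `H` can be partitioned into `k` forcing chains `Q 0, …, Q (k-1)`:
`Q i` is a duplicate-free list starting at the `i`-th vertex `σ i` of the zero forcing set,
every vertex appears in exactly one chain, each vertex of a chain forces the next one, and
each chain is an induced path of `H`. -/
theorem forcing_chains_partition {V : Type*} [Fintype V] (H : SimpleGraph V)
    (k : ℕ) (hk : k ≤ Fintype.card V) (σ : Fin (Fintype.card V) ≃ V)
    (hσ : IsZeroForcingOrder H k σ) :
    ∃ Q : Fin k → List V,
      (∀ i : Fin k, (Q i).head? = some (σ ⟨(i : ℕ), lt_of_lt_of_le i.isLt hk⟩)) ∧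
      (∀ i : Fin k, (Q i).Nodup) ∧
      (∀ v : V, ∃! i : Fin k, v ∈ Q i) ∧
      (∀ i : Fin k, (Q i).Chain' (Forces H k σ)) ∧
      (∀ i : Fin k, (Q i).Chain' H.Adj) ∧
      (∀ i : Fin k, ∀ a ∈ Q i, ∀ b ∈ Q i,
        H.Adj a b → ([a, b] <:+: Q i ∨ [b, a] <:+: Q i)) := by
  obtain ⟨F, hF⟩ := hσ.exists_isForcerMap
  have hforces (i : Fin k) :
      ((forcingChain F k (Fin.castLE hk i)).map σ).IsChain (Forces H k σ) :=
    (List.isChain_map σ).2 <| (List.isChain_isInfix _).imp fun _ _ => hF.forces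
  have hmem (v : V) (i : Fin k) :
      v ∈ (forcingChain F k (Fin.castLE hk i)).map σ ↔
        forcingRoot F k (σ.symm v) = Fin.castLE hk i := by
    simp [mem_forcingChain, ← Equiv.eq_symm_apply]
  refine ⟨fun i => (forcingChain F k (Fin.castLE hk i)).map σ, fun i => ?_, fun i => ?_,
    fun v => ?_, hforces, fun i => (hforces i).imp fun _ _ => Forces.adj, fun i => ?_⟩
  · rw [List.head?_map, head?_forcingChain (r := Fin.castLE hk i) i.isLt]
    rfl
  · exact (pairwise_forcingChain _).nodup.map σ.injective
  · exact ⟨⟨_, forcingRoot_lt hF.lt _⟩, (hmem v _).2 rfl,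
      fun j hj => Fin.ext (congrArg Fin.val ((hmem v j).1 hj)).symm⟩
  · intro a ha b hb hab
    obtain ⟨p, hp, rfl⟩ := List.mem_map.1 ha
    obtain ⟨q, hq, rfl⟩ := List.mem_map.1 hb
    rcases lt_or_gt_of_ne (fun h : p = q => hab.ne (congrArg σ h)) with hpq | hqp
    · exact .inl ((hF.pair_infix_of_adj hp hq hpq hab).map σ)
    · exact .inr ((hF.pair_infix_of_adj hq hp hqp hab.symm).map σ)
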